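/- If X is a θⁿ-Urysohn topological space, then |X| ≤ d_γⁿ(X)^(ψ_γⁿ(X)·t_γⁿ(X)), where d_γⁿ(X) is the n-γ-density of X. -/

import Mathlib

open Set Topology Cardinal

universe u v

def thetaCl (X : Type u) [TopologicalSpace X] (A : Set X) : Set X :=
  {x | ∀ U : Set X, IsOpen U → x ∈ U → (closure U ∩ A).Nonempty}

def thetaClN (X : Type u) [TopologicalSpace X] (n : ℕ) (A : Set X) : Set X :=
  (thetaCl X)^[n] A

def gammaCl (X : Type u) [TopologicalSpace X] (n : ℕ) (A : Set X) : Set X :=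
  {x | ∀ U : Set X, IsOpen U → x ∈ U → (thetaClN X n U ∩ A).Nonempty}

def ThetaUrysohn (X : Type u) [TopologicalSpace X] (n : ℕ) : Prop :=
  ∀ x y : X, x ≠ y → ∃ U V : Set X, IsOpen U ∧ IsOpen V ∧ x ∈ U ∧ y ∈ V ∧
    thetaClN X n U ∩ thetaClN X n V = ∅

noncomputable def tGamma (X : Type u) [TopologicalSpace X] (n : ℕ) : Cardinal.{u} :=
  sInf {κ | ∀ (x : X) (A : Set X), x ∈ gammaCl X n A →
    ∃ B ⊆ A, #B ≤ κ ∧ x ∈ gammaCl X n B}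

noncomputable def psiGamma (X : Type u) [TopologicalSpace X] (n : ℕ) : Cardinal.{u} :=
  ⨆ x : X, sInf {κ | ∃ B : Set (Set X), #B ≤ κ ∧ (∀ U ∈ B, IsOpen U ∧ x ∈ U) ∧
    (⋂ U ∈ B, gammaCl X n (thetaClN X n U)) = {x}}

noncomputable def dGamma (X : Type u) [TopologicalSpace X] (n : ℕ) : Cardinal.{u} :=
  sInf {κ | ∃ A : Set X, #A ≤ κ ∧ gammaCl X n A = Set.univ}

/-! Fix a γ-dense set `D` with `|D| ≤ d` and, for each `x`, a family `V x` of at most `ψ` open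
neighbourhoods with `⋂_{U ∈ V x} cl_γⁿ (cl_θⁿ U) = {x}` (θⁿ-Urysohn makes the family of all open
neighbourhoods such a family). As `x ∈ cl_γⁿ (D ∩ cl_θⁿ U)`, tightness yields
`A x U ⊆ D ∩ cl_θⁿ U` with `|A x U| ≤ t` and `x ∈ cl_γⁿ (A x U)`. The family `{A x U | U ∈ V x}`
determines `x`: any `y` with the same family lies in every `cl_γⁿ (cl_θⁿ U)`, `U ∈ V x`. Hence `X`
injects into the `≤ ψ`-sized families of `≤ t`-sized subsets of `D`, of which there are at most
`(d ^ t) ^ ψ`. -/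

theorem mk_bounded_nonempty_subset_le {α : Type u} (S : Set α) (c : Cardinal.{u}) :
    #{s : Set α | s.Nonempty ∧ s ⊆ S ∧ #s ≤ c} ≤ #S ^ c := by
  have hrange : {s : Set α | s.Nonempty ∧ s ⊆ S ∧ #s ≤ c} ⊆
      range fun f : c.out → S => range (Subtype.val ∘ f) := by
    rintro s ⟨⟨a, ha⟩, hsS, hs⟩
    obtain ⟨e⟩ : Nonempty (s ↪ c.out) := by rwa [← le_def, mk_out]
    have : Nonempty s := ⟨⟨a, ha⟩⟩
    refine ⟨inclusion hsS ∘ Function.invFun e, ?_⟩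
    change range ((Subtype.val ∘ inclusion hsS) ∘ Function.invFun e) = s
    rw [val_comp_inclusion, range_comp, (Function.invFun_surjective e.injective).range_eq,
      image_univ, Subtype.range_coe]
  calc _ ≤ #(range fun f : c.out → S => range (Subtype.val ∘ f)) := mk_le_mk_of_subset hrange
    _ ≤ #(c.out → S) := mk_range_le
    _ = #S ^ c := by rw [← power_def, mk_out]

section

variable {X : Type u} [TopologicalSpace X] {n : ℕ}

theorem thetaCl_monotone : Monotone (thetaCl X) :=
  fun _ _ hAB _ hx U hU hxU => (hx U hU hxU).mono (inter_subset_inter_right _ hAB)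

theorem subset_thetaCl (A : Set X) : A ⊆ thetaCl X A :=
  fun x hx _ _ hxU => ⟨x, subset_closure hxU, hx⟩

theorem thetaClN_monotone (n : ℕ) : Monotone (thetaClN X n) :=
  thetaCl_monotone.iterate n

theorem subset_thetaClN (n : ℕ) (A : Set X) : A ⊆ thetaClN X n A :=
  Function.id_le_iterate_of_id_le subset_thetaCl n A

theorem gammaCl_monotone (n : ℕ) : Monotone (gammaCl X n) :=
  fun _ _ hAB _ hx U hU hxU => (hx U hU hxU).mono (inter_subset_inter_right _ hAB)

theorem subset_gammaCl (n : ℕ) (A : Set X) : A ⊆ gammaCl X n A :=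
  fun x hx U _ hxU => ⟨x, subset_thetaClN n U hxU, hx⟩

theorem Set.Nonempty.of_mem_gammaCl {A : Set X} {x : X} (hx : x ∈ gammaCl X n A) :
    A.Nonempty :=
  (hx Set.univ isOpen_univ trivial).right

theorem mem_gammaCl_inter_thetaClN {D U : Set X} {x : X} (hD : gammaCl X n D = Set.univ)
    (hU : IsOpen U) (hxU : x ∈ U) : x ∈ gammaCl X n (D ∩ thetaClN X n U) := by
  intro W hW hxW
  obtain ⟨z, hzW, hzD⟩ := (hD ▸ mem_univ x : x ∈ gammaCl X n D) (W ∩ U) (hW.inter hU) ⟨hxW, hxU⟩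
  exact ⟨z, thetaClN_monotone n inter_subset_left hzW, hzD,
    thetaClN_monotone n inter_subset_right hzW⟩

theorem ThetaUrysohn.iInter_gammaCl_thetaClN_eq_singleton (hX : ThetaUrysohn X n) (x : X) :
    ⋂ U ∈ {U : Set X | IsOpen U ∧ x ∈ U}, gammaCl X n (thetaClN X n U) = {x} := by
  refine Subset.antisymm (fun y hy => ?_) ?_
  · by_contra hyx
    obtain ⟨U, V, hU, hV, hxU, hyV, hUV⟩ := hX x y (Ne.symm hyx)
    obtain ⟨z, hzV, hzU⟩ := mem_iInter₂.1 hy U ⟨hU, hxU⟩ V hV hyV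
    exact hUV.subset ⟨hzU, hzV⟩
  · rintro _ rfl
    exact mem_iInter₂.2 fun U hU =>
      subset_gammaCl n _ (subset_thetaClN n U hU.2)

theorem exists_gammaCl_eq_univ_card_le_dGamma (X : Type u) [TopologicalSpace X] (n : ℕ) :
    ∃ D : Set X, #D ≤ dGamma X n ∧ gammaCl X n D = Set.univ :=
  csInf_mem (s := {κ | ∃ D : Set X, #D ≤ κ ∧ gammaCl X n D = Set.univ})
    ⟨_, Set.univ, le_rfl, univ_subset_iff.1 (subset_gammaCl n Set.univ)⟩

theorem exists_subset_card_le_tGamma {A : Set X} {x : X} (hx : x ∈ gammaCl X n A) :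
    ∃ B ⊆ A, #B ≤ tGamma X n ∧ x ∈ gammaCl X n B :=
  csInf_mem (s := {κ | ∀ (x : X) (A : Set X), x ∈ gammaCl X n A →
      ∃ B ⊆ A, #B ≤ κ ∧ x ∈ gammaCl X n B})
    ⟨#X, fun _ A hx => ⟨A, subset_rfl, mk_set_le A, hx⟩⟩ x A hx

theorem ThetaUrysohn.exists_card_le_psiGamma (hX : ThetaUrysohn X n) (x : X) :
    ∃ B : Set (Set X), #B ≤ psiGamma X n ∧ (∀ U ∈ B, IsOpen U ∧ x ∈ U) ∧
      ⋂ U ∈ B, gammaCl X n (thetaClN X n U) = {x} := by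
  obtain ⟨B, hB, hBx, hBinter⟩ := csInf_mem (s := {κ | ∃ B : Set (Set X), #B ≤ κ ∧
      (∀ U ∈ B, IsOpen U ∧ x ∈ U) ∧ ⋂ U ∈ B, gammaCl X n (thetaClN X n U) = {x}})
    ⟨_, _, le_rfl, fun _ hU => hU, hX.iInter_gammaCl_thetaClN_eq_singleton x⟩
  exact ⟨B, hB.trans (le_ciSup bddAbove_of_small x), hBx, hBinter⟩

theorem dGamma_ne_zero [Nonempty X] : dGamma X n ≠ 0 := by
  obtain ⟨D, hD, hDX⟩ := exists_gammaCl_eq_univ_card_le_dGamma X n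
  intro h
  obtain ⟨x⟩ := ‹Nonempty X›
  have hDne : D.Nonempty := .of_mem_gammaCl (hDX ▸ mem_univ x : x ∈ gammaCl X n D)
  exact hDne.ne_empty (mk_set_eq_zero_iff.1 (le_zero_iff.1 (h ▸ hD)))

theorem ThetaUrysohn.mk_le_mk_bounded_families [Nontrivial X] (hX : ThetaUrysohn X n)
    {D : Set X} (hD : gammaCl X n D = Set.univ) :
    #X ≤ #{F : Set (Set X) | F.Nonempty ∧
      F ⊆ {A | A.Nonempty ∧ A ⊆ D ∧ #A ≤ tGamma X n} ∧ #F ≤ psiGamma X n} := by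
  choose V hVcard hVnhds hVinter using hX.exists_card_le_psiGamma
  have hVne (x : X) : Nonempty (V x) := by
    refine nonempty_iff_ne_empty'.2 fun hV => ?_
    obtain ⟨y, hy⟩ := exists_ne x
    have : y ∈ ⋂ U ∈ V x, gammaCl X n (thetaClN X n U) := by simp [hV]
    exact hy (mem_singleton_iff.1 (hVinter x ▸ this))
  have hA (x : X) (U : V x) :
      ∃ A ⊆ D ∩ thetaClN X n U, #A ≤ tGamma X n ∧ x ∈ gammaCl X n A :=
    exists_subset_card_le_tGamma <|
      mem_gammaCl_inter_thetaClN hD (hVnhds x U U.2).1 (hVnhds x U U.2).2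
  choose A hAsub hAcard hxA using hA
  have hinj : Function.Injective fun x => range (A x) := by
    intro x y (hxy : range (A x) = range (A y))
    refine (mem_singleton_iff.1 ?_).symm
    rw [← hVinter x]
    refine mem_iInter₂.2 fun U hU => ?_
    obtain ⟨U', hU'⟩ : A x ⟨U, hU⟩ ∈ range (A y) := hxy ▸ mem_range_self _
    exact gammaCl_monotone n ((hAsub x _).trans inter_subset_right) (hU' ▸ hxA y U')
  refine (mk_range_eq _ hinj).symm.trans_le (mk_le_mk_of_subset ?_)
  rintro _ ⟨x, rfl⟩
  exact ⟨range_nonempty _, range_subset_iff.2 fun U =>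
    ⟨.of_mem_gammaCl (hxA x U), (hAsub x U).trans inter_subset_left, hAcard x U⟩,
    mk_range_le.trans (hVcard x)⟩

end

theorem card_le_dGamma_pow (X : Type u) [TopologicalSpace X] (n : ℕ)
    (hX : ThetaUrysohn X n) :
    #X ≤ dGamma X n ^ (psiGamma X n * tGamma X n) := by
  rcases subsingleton_or_nontrivial X with hX₁ | hX₁
  · rcases isEmpty_or_nonempty X with _ | _
    · simp
    · exact (le_one_iff_subsingleton.2 hX₁).trans
        (Cardinal.one_le_iff_ne_zero.2 (power_ne_zero _ dGamma_ne_zero))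
  obtain ⟨D, hDcard, hD⟩ := exists_gammaCl_eq_univ_card_le_dGamma X n
  calc #X ≤ _ := hX.mk_le_mk_bounded_families hD
    _ ≤ #{A | A.Nonempty ∧ A ⊆ D ∧ #A ≤ tGamma X n} ^ psiGamma X n :=
      mk_bounded_nonempty_subset_le _ _
    _ ≤ (#D ^ tGamma X n) ^ psiGamma X n :=
      power_le_power_right (mk_bounded_nonempty_subset_le _ _)
    _ ≤ (dGamma X n ^ tGamma X n) ^ psiGamma X n :=
      power_le_power_right (power_le_power_right hDcard)
    _ = dGamma X n ^ (psiGamma X n * tGamma X n) := by rw [← power_mul, mul_comm]
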